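/- Let R be a commutative semiring, S a multiplicative subset of R, and A an S-primary k-ideal of R disjoint from S. Let x ∈ R be such that sx ∉ A for every s ∈ S, and let s ∈ S. Then the ideal (A : sx) = {y ∈ R : sxy ∈ A} is an S-primary k-ideal of R disjoint from S, and there exists r ∈ S such that r·√(A : sx) ⊆ √A ⊆ √(A : sx). -/

import Mathlib

/-!
The witness `t` of `A` also witnesses that `(A : s x)` is S-primary, since `a b ∈ (A : s x)`
means `(s x a) b ∈ A`. For the radicals, `y ∈ √(A : s x)` gives `(s x) y^(n+1) ∈ A`; as
`t s x ∉ A`, this forces `t y^(n+1) ∈ √A`, hence `(t y)^(n+1) ∈ √A` and `t y ∈ √A`.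
-/

/-- For an ideal `A` of a commutative semiring and an element `t`,
the quotient (colon) ideal `(A : t) = {y | t * y ∈ A}`. -/
def colonIdeal {R : Type*} [CommSemiring R] (A : Ideal R) (t : R) : Ideal R where
  carrier := {y : R | t * y ∈ A}
  add_mem' := fun {a b} ha hb => by simpa [mul_add] using A.add_mem ha hb
  zero_mem' := by simp
  smul_mem' := fun c y hy => by
    simpa [smul_eq_mul, mul_left_comm] using A.mul_mem_left c hy

section

variable {R : Type*} [CommSemiring R]

def IsKIdeal (I : Ideal R) : Prop :=
  ∀ a b : R, a + b ∈ I → a ∈ I → b ∈ I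

/-- `A` is S-primary with witness `t ∈ S` exactly when it is disjoint from `S` and
`IsPrimaryUpTo t A` holds. -/
def IsPrimaryUpTo (t : R) (A : Ideal R) : Prop :=
  ∀ a b : R, a * b ∈ A → t * a ∈ A ∨ t * b ∈ A.radical

@[simp]
theorem mem_colonIdeal {A : Ideal R} {u y : R} : y ∈ colonIdeal A u ↔ u * y ∈ A :=
  Iff.rfl

theorem le_colonIdeal (A : Ideal R) (u : R) : A ≤ colonIdeal A u :=
  fun _ ha => A.mul_mem_left u ha

theorem disjoint_colonIdeal_iff {S : Set R} {A : Ideal R} {u : R} :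
    Disjoint S (colonIdeal A u : Set R) ↔ ∀ s ∈ S, s * u ∉ A := by
  simp only [Set.disjoint_left, SetLike.mem_coe, mem_colonIdeal, mul_comm u]

theorem IsKIdeal.colon {A : Ideal R} (hA : IsKIdeal A) (u : R) :
    IsKIdeal (colonIdeal A u) := fun a b hab ha =>
  hA (u * a) (u * b) (by rwa [← mul_add]) ha

theorem IsPrimaryUpTo.colon {t : R} {A : Ideal R} (hA : IsPrimaryUpTo t A) (u : R) :
    IsPrimaryUpTo t (colonIdeal A u) := by
  intro a b hab
  rcases hA (u * a) b (by rwa [mul_assoc]) with h | h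
  · exact Or.inl (by rwa [mem_colonIdeal, mul_left_comm])
  · exact Or.inr (Ideal.radical_mono (le_colonIdeal A u) h)

theorem IsPrimaryUpTo.mul_mem_radical_of_mem_radical_colonIdeal {t u y : R} {A : Ideal R}
    (hA : IsPrimaryUpTo t A) (htu : t * u ∉ A) (hy : y ∈ (colonIdeal A u).radical) :
    t * y ∈ A.radical := by
  obtain ⟨n, hn⟩ := hy
  have hn' : u * y ^ (n + 1) ∈ A := by
    rw [pow_succ, ← mul_assoc]
    exact A.mul_mem_right y hn
  have hty : t * y ^ (n + 1) ∈ A.radical := (hA u _ hn').resolve_left htu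
  refine Ideal.radical_isRadical A ⟨n + 1, ?_⟩
  rw [show (t * y) ^ (n + 1) = t ^ n * (t * y ^ (n + 1)) by ring]
  exact A.radical.mul_mem_left _ hty

end

theorem colon_S_primary_general {R : Type*} [CommSemiring R]
    (S : Set R) (hSmul : ∀ s ∈ S, ∀ t ∈ S, s * t ∈ S)
    (A : Ideal R)
    (hAk : ∀ a b : R, a + b ∈ A → a ∈ A → b ∈ A)
    (hAprim : ∃ t ∈ S, ∀ a b : R, a * b ∈ A → t * a ∈ A ∨ t * b ∈ A.radical)
    (x : R) (hx : ∀ s ∈ S, s * x ∉ A)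
    (s : R) (hs : s ∈ S) :
    Disjoint S ((colonIdeal A (s * x) : Set R)) ∧
    (∀ a b : R, a + b ∈ colonIdeal A (s * x) → a ∈ colonIdeal A (s * x) →
      b ∈ colonIdeal A (s * x)) ∧
    (∃ t ∈ S, ∀ a b : R, a * b ∈ colonIdeal A (s * x) →
      t * a ∈ colonIdeal A (s * x) ∨ t * b ∈ (colonIdeal A (s * x)).radical) ∧
    (∃ r ∈ S, (∀ y ∈ (colonIdeal A (s * x)).radical, r * y ∈ A.radical) ∧
      A.radical ≤ (colonIdeal A (s * x)).radical) := by
  obtain ⟨t, htS, ht⟩ := hAprim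
  have hprim : IsPrimaryUpTo t A := ht
  have hxS : ∀ u ∈ S, u * (s * x) ∉ A := fun u hu => by
    rw [← mul_assoc]
    exact hx (u * s) (hSmul u hu s hs)
  refine ⟨disjoint_colonIdeal_iff.mpr hxS, IsKIdeal.colon hAk _,
    ⟨t, htS, hprim.colon _⟩, t, htS,
    fun _ hy => hprim.mul_mem_radical_of_mem_radical_colonIdeal (hxS t htS) hy,
    Ideal.radical_mono (le_colonIdeal A _)⟩

/-- If `A` is an S-primary k-ideal disjoint from `S` and `x ∈ R` satisfies
`s * x ∉ A` for every `s ∈ S`, then for every `s ∈ S` the ideal `(A : s*x)` is an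
S-primary k-ideal disjoint from `S`, and there is `r ∈ S` with
`r • √(A : s*x) ⊆ √A ⊆ √(A : s*x)`. -/
theorem colon_S_primary {R : Type*} [CommSemiring R]
    (S : Set R) (hS1 : (1 : R) ∈ S) (hSmul : ∀ s ∈ S, ∀ t ∈ S, s * t ∈ S)
    (A : Ideal R) (hAS : Disjoint S (A : Set R))
    (hAk : ∀ a b : R, a + b ∈ A → a ∈ A → b ∈ A)
    (hAprim : ∃ t ∈ S, ∀ a b : R, a * b ∈ A → t * a ∈ A ∨ t * b ∈ A.radical)
    (x : R) (hx : ∀ s ∈ S, s * x ∉ A)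
    (s : R) (hs : s ∈ S) :
    Disjoint S ((colonIdeal A (s * x) : Set R)) ∧
    (∀ a b : R, a + b ∈ colonIdeal A (s * x) → a ∈ colonIdeal A (s * x) →
      b ∈ colonIdeal A (s * x)) ∧
    (∃ t ∈ S, ∀ a b : R, a * b ∈ colonIdeal A (s * x) →
      t * a ∈ colonIdeal A (s * x) ∨ t * b ∈ (colonIdeal A (s * x)).radical) ∧
    (∃ r ∈ S, (∀ y ∈ (colonIdeal A (s * x)).radical, r * y ∈ A.radical) ∧
      A.radical ≤ (colonIdeal A (s * x)).radical) :=
  colon_S_primary_general S hSmul A hAk hAprim x hx s hs
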